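/- (Functional equation for spherical functions) Assume (G,K,θ) is a multiplicity-free triple. A nonzero function φ ∈ L(G) is a spherical function if and only if Σ_{k∈K} φ(gkh)·conj(ψ(k)) = φ(g)·φ(h) for all g, h ∈ G. -/

import Mathlib

open scoped BigOperators ComplexConjugate Classical

set_option linter.unusedSectionVars false
set_option synthInstance.maxHeartbeats 1000000
set_option maxHeartbeats 1000000

noncomputable section

namespace MFT

variable {G : Type} [Group G] [Fintype G]
variable {V : Type} [NormedAddCommGroup V] [InnerProductSpace ℂ V] [FiniteDimensional ℂ V]

/-- Left translation of functions on `G`: `(translate h f) g = f (h⁻¹ * g)`.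
This is the left regular action of `G`. -/
def translate {A : Type} (h : G) (f : G → A) : G → A := fun g => f (h⁻¹ * g)

/-- A representation by linear automorphisms is unitary if it preserves the inner product. -/
def IsUnitaryRep {H W : Type} [Group H] [NormedAddCommGroup W] [InnerProductSpace ℂ W]
    (ρ : H →* (W ≃ₗ[ℂ] W)) : Prop :=
  ∀ (h : H) (x y : W), (inner ℂ (ρ h x) (ρ h y) : ℂ) = (inner ℂ x y : ℂ)

/-- Irreducibility of a representation: the space is nonzero and has no proper nonzero
invariant subspace. -/
def IsIrreducibleRep {H W : Type} [Group H] [AddCommGroup W] [Module ℂ W]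
    (ρ : H →* (W ≃ₗ[ℂ] W)) : Prop :=
  (⊥ : Submodule ℂ W) ≠ ⊤ ∧
    ∀ p : Submodule ℂ W, (∀ (h : H) (x : W), x ∈ p → ρ h x ∈ p) → p = ⊥ ∨ p = ⊤

variable (K : Subgroup G) (θ : ↥K →* (V ≃ₗ[ℂ] V))

/-- The space `Ind_K^G V` of the representation induced by `θ`:
functions `f : G → V` with `f (g k) = θ k⁻¹ (f g)`. -/
def ind : Submodule ℂ (G → V) where
  carrier := {f | ∀ (g : G) (k : K), f (g * (k : G)) = θ k⁻¹ (f g)}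
  add_mem' := by
    intro f₁ f₂ h₁ h₂ g k
    simp only [Pi.add_apply, h₁ g k, h₂ g k, map_add]
  zero_mem' := by intro g k; simp
  smul_mem' := by
    intro c f hf g k
    simp only [Pi.smul_apply, hf g k, map_smul]

theorem translate_mem_ind {f : G → V} (hf : f ∈ ind K θ) (h : G) : translate h f ∈ ind K θ := by
  intro g k
  simpa [translate, mul_assoc] using hf (h⁻¹ * g) k

/-- The left regular action of `G` on the induced space, `λ(h) f = f (h⁻¹ ·)`. -/
def lamL (h : G) : ↥(ind K θ) →ₗ[ℂ] ↥(ind K θ) where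
  toFun f := ⟨translate h ↑f, translate_mem_ind K θ f.2 h⟩
  map_add' f₁ f₂ := by apply Subtype.ext; funext g; simp [translate]
  map_smul' c f := by apply Subtype.ext; funext g; simp [translate]

instance : AddCommGroup (↥(ind K θ) →ₗ[ℂ] ↥(ind K θ)) := LinearMap.addCommGroup

instance : Module ℂ (↥(ind K θ) →ₗ[ℂ] ↥(ind K θ)) := LinearMap.module

/-- The Hecke algebra condition: `F (k₁ g k₂) = θ k₂⁻¹ ∘ F g ∘ θ k₁⁻¹`. -/
def IsHecke (F : G → (V →ₗ[ℂ] V)) : Prop :=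
  ∀ (g : G) (k₁ k₂ : K),
    F ((k₁ : G) * g * (k₂ : G)) = (θ k₂⁻¹).toLinearMap ∘ₗ F g ∘ₗ (θ k₁⁻¹).toLinearMap

/-- Convolution on the Hecke algebra: `(F₁ * F₂) g = ∑ h, F₁ (h⁻¹ g) ∘ F₂ h`. -/
def heckeConv (F₁ F₂ : G → (V →ₗ[ℂ] V)) : G → (V →ₗ[ℂ] V) :=
  fun g => ∑ h : G, F₁ (h⁻¹ * g) ∘ₗ F₂ h

/-- Involution on the Hecke algebra: `F* g = (F g⁻¹)*`. -/
def heckeStar (F : G → (V →ₗ[ℂ] V)) : G → (V →ₗ[ℂ] V) :=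
  fun g => LinearMap.adjoint (F g⁻¹)

/-- The inner product on the Hecke algebra:
`⟨F₁, F₂⟩ = ∑ g, (dim V)⁻¹ tr (F₂(g)* ∘ F₁(g))`. -/
def heckeInner (F₁ F₂ : G → (V →ₗ[ℂ] V)) : ℂ :=
  ∑ g : G, (Module.finrank ℂ V : ℂ)⁻¹ *
    LinearMap.trace ℂ V (LinearMap.adjoint (F₂ g) ∘ₗ F₁ g)

/-- `(ξ F) f g = ∑ h, F (h⁻¹ g) (f h)`. -/
def xiFun (F : G → (V →ₗ[ℂ] V)) (f : G → V) : G → V := fun g => ∑ h : G, F (h⁻¹ * g) (f h)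

/-- `ξ F` as a linear endomorphism of `G → V`. -/
def xiL (F : G → (V →ₗ[ℂ] V)) : (G → V) →ₗ[ℂ] (G → V) where
  toFun := xiFun F
  map_add' f₁ f₂ := by funext g; simp [xiFun, Finset.sum_add_distrib]
  map_smul' c f := by funext g; simp [xiFun, Finset.smul_sum]

/-- The paper's inner product on the induced space:
`⟨f₁, f₂⟩ = |K|⁻¹ ∑ g, ⟨f₁ g, f₂ g⟩_V` (conjugate-linear in the second variable). -/
def innerInd (f₁ f₂ : G → V) : ℂ := (Nat.card K : ℂ)⁻¹ * ∑ g : G, (inner ℂ (f₂ g) (f₁ g) : ℂ)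

/-- Convolution of complex valued functions on `G`. -/
def convC (f₁ f₂ : G → ℂ) : G → ℂ := fun g => ∑ h : G, f₁ h * f₂ (h⁻¹ * g)

/-- The involution `f* g = conj (f g⁻¹)` on `L(G)`. -/
def starC (f : G → ℂ) : G → ℂ := fun g => conj (f g⁻¹)

/-- The paper's inner product on `L(G)`: `⟨f₁, f₂⟩ = ∑ g, f₁ g • conj (f₂ g)`. -/
def innerC (f₁ f₂ : G → ℂ) : ℂ := ∑ g : G, f₁ g * conj (f₂ g)

/-- The function `ψ (k) = (d_θ/|K|) ⟨v, θ k v⟩` on `K`, extended by `0` on `G \ K`. -/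
def psi (v : V) : G → ℂ := fun g =>
  if h : g ∈ K then ((Module.finrank ℂ V : ℂ) / (Nat.card K : ℂ)) * (inner ℂ (θ ⟨g, h⟩ v) v : ℂ)
  else 0

/-- `(T_v f) g = √(d_θ/|K|) ⟨f g, v⟩`. -/
def Tv (v : V) (f : G → V) : G → ℂ := fun g =>
  (Real.sqrt ((Module.finrank ℂ V : ℝ) / (Nat.card K : ℝ)) : ℂ) * (inner ℂ v (f g) : ℂ)

/-- The Hecke algebra `H(G,K,ψ) = {f : f = ψ * f * ψ}` as a set. -/
def HSet (v : V) : Set (G → ℂ) := {f | convC (convC (psi K θ v) f) (psi K θ v) = f}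

/-- `(S_v F) g = d_θ ⟨F g v, v⟩`. -/
def Sv (v : V) (F : G → (V →ₗ[ℂ] V)) : G → ℂ :=
  fun g => (Module.finrank ℂ V : ℂ) * (inner ℂ v (F g v) : ℂ)

/-- A spherical function: an element of `H(G,K,ψ)` taking value `1` at the identity which
is an eigenvector of all convolution operators coming from `H(G,K,ψ)`. -/
def IsSpherical (v : V) (φ : G → ℂ) : Prop :=
  φ ∈ HSet K θ v ∧ φ 1 = 1 ∧ ∀ f ∈ HSet K θ v, ∃ c : ℂ, convC φ f = c • φ

/-- The intertwining space `Hom_{K_s}(Res^K_{K_s} θ, θ^s)` where `K_s = K ∩ s K s⁻¹`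
and `θ^s (x) = θ (s⁻¹ x s)`. -/
def interSpace (s : G) : Submodule ℂ (V →ₗ[ℂ] V) where
  carrier := {T | ∀ (x : G) (hx : x ∈ K) (hx' : s⁻¹ * x * s ∈ K),
      T ∘ₗ (θ ⟨x, hx⟩).toLinearMap = (θ ⟨s⁻¹ * x * s, hx'⟩).toLinearMap ∘ₗ T}
  add_mem' := by
    intro a b ha hb x hx hx'
    simp only [LinearMap.add_comp, LinearMap.comp_add, ha x hx hx', hb x hx hx']
  zero_mem' := by
    intro x hx hx'
    simp
  smul_mem' := by
    intro c a ha x hx hx'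
    simp only [LinearMap.smul_comp, LinearMap.comp_smul, ha x hx hx']

/-- `S` is a complete set of representatives of the double cosets `K\G/K`. -/
def IsDoubleCosetReps (S : Finset G) : Prop :=
  ∀ g : G, ∃! s : G, s ∈ S ∧ ∃ k₁ k₂ : K, g = (k₁ : G) * s * (k₂ : G)

/-- The commutant `End_G(Ind_K^G V)`. -/
def commutant : Submodule ℂ (↥(ind K θ) →ₗ[ℂ] ↥(ind K θ)) where
  carrier := {T | ∀ (h : G) (f : ↥(ind K θ)), T (lamL K θ h f) = lamL K θ h (T f)}
  add_mem' := by
    intro a b ha hb h f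
    simp [ha h f, hb h f]
  zero_mem' := by intro h f; simp
  smul_mem' := by
    intro c a ha h f
    simp [ha h f]

/-- The space `Hom_G(W, Ind_K^G V)` of `G`-equivariant linear maps from `(σ, W)` to the
induced representation. -/
def homGInd {W : Type} [AddCommGroup W] [Module ℂ W] (σ : G →* (W ≃ₗ[ℂ] W)) :
    Submodule ℂ (W →ₗ[ℂ] (G → V)) where
  carrier := {A | (∀ w : W, A w ∈ ind K θ) ∧ ∀ (g : G) (w : W), A (σ g w) = translate g (A w)}
  add_mem' := by
    rintro A B ⟨hA₁, hA₂⟩ ⟨hB₁, hB₂⟩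
    refine ⟨fun w => (ind K θ).add_mem (hA₁ w) (hB₁ w), fun g w => ?_⟩
    funext x
    simp [translate, hA₂ g w, hB₂ g w, Pi.add_apply]
  zero_mem' := by
    refine ⟨fun w => (ind K θ).zero_mem, fun g w => ?_⟩
    funext x
    simp [translate]
  smul_mem' := by
    rintro c A ⟨hA₁, hA₂⟩
    refine ⟨fun w => (ind K θ).smul_mem c (hA₁ w), fun g w => ?_⟩
    funext x
    simp [translate, hA₂ g w]

/-- `Ind_K^G θ` is multiplicity-free: every irreducible representation of `G` occurs with
multiplicity at most `1`. -/
def IsMultFree : Prop :=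
  ∀ (W : Type) [AddCommGroup W] [Module ℂ W] [FiniteDimensional ℂ W]
    (σ : G →* (W ≃ₗ[ℂ] W)), IsIrreducibleRep σ → Module.finrank ℂ ↥(homGInd K θ σ) ≤ 1

theorem convC_add_left (f₁ f₂ g : G → ℂ) : convC (f₁ + f₂) g = convC f₁ g + convC f₂ g := by
  funext x
  simp [convC, add_mul, Finset.sum_add_distrib]

theorem convC_add_right (f g₁ g₂ : G → ℂ) : convC f (g₁ + g₂) = convC f g₁ + convC f g₂ := by
  funext x
  simp [convC, mul_add, Finset.sum_add_distrib]

theorem convC_smul_left (c : ℂ) (f g : G → ℂ) : convC (c • f) g = c • convC f g := by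
  funext x
  simp [convC, Finset.mul_sum, mul_assoc]

theorem convC_smul_right (c : ℂ) (f g : G → ℂ) : convC f (c • g) = c • convC f g := by
  funext x
  simp [convC, Finset.mul_sum, mul_left_comm]

theorem convC_zero_left (g : G → ℂ) : convC 0 g = 0 := by funext x; simp [convC]

theorem convC_zero_right (f : G → ℂ) : convC f 0 = 0 := by funext x; simp [convC]

/-- The Hecke algebra `H(G,K,ψ)` as a subspace of `L(G)`. -/
def heckeSub (v : V) : Submodule ℂ (G → ℂ) where
  carrier := HSet K θ v
  add_mem' := by
    intro a b ha hb
    have ha' : convC (convC (psi K θ v) a) (psi K θ v) = a := ha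
    have hb' : convC (convC (psi K θ v) b) (psi K θ v) = b := hb
    show convC (convC (psi K θ v) (a + b)) (psi K θ v) = a + b
    rw [convC_add_right, convC_add_left, ha', hb']
  zero_mem' := by
    show convC (convC (psi K θ v) 0) (psi K θ v) = 0
    rw [convC_zero_right, convC_zero_left]
  smul_mem' := by
    intro c a ha
    have ha' : convC (convC (psi K θ v) a) (psi K θ v) = a := ha
    show convC (convC (psi K θ v) (c • a)) (psi K θ v) = c • a
    rw [convC_smul_right, convC_smul_left, ha']

/-- The subspace `I(G,K,ψ) = {f ∈ L(G) : f * ψ = f}`. -/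
def ISub (v : V) : Submodule ℂ (G → ℂ) where
  carrier := {φ | convC φ (psi K θ v) = φ}
  add_mem' := by
    intro a b ha hb
    have ha' : convC a (psi K θ v) = a := ha
    have hb' : convC b (psi K θ v) = b := hb
    show convC (a + b) (psi K θ v) = a + b
    rw [convC_add_left, ha', hb']
  zero_mem' := by
    show convC 0 (psi K θ v) = 0
    rw [convC_zero_left]
  smul_mem' := by
    intro c a ha
    have ha' : convC a (psi K θ v) = a := ha
    show convC (c • a) (psi K θ v) = c • a
    rw [convC_smul_left, ha']

/-- The subspace of `L(G)` spanned by the left translates of `φ`. -/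
def sphSpan (φ : G → ℂ) : Submodule ℂ (G → ℂ) :=
  Submodule.span ℂ (Set.range fun g : G => translate g φ)

/-- A submodule of functions on `G` invariant under all left translations. -/
def IsInvariantSub {A : Type} [AddCommGroup A] [Module ℂ A] (p : Submodule ℂ (G → A)) : Prop :=
  ∀ h : G, ∀ f ∈ p, translate h f ∈ p

/-- `p` is an irreducible `G`-invariant subspace of the induced representation. -/
def IsIrredSubOfInd (p : Submodule ℂ (G → V)) : Prop :=
  p ≤ ind K θ ∧ IsInvariantSub p ∧ p ≠ ⊥ ∧
    ∀ q : Submodule ℂ (G → V), q ≤ p → IsInvariantSub q → q = ⊥ ∨ q = p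

/-!
Schur's lemma makes `ψ` an idempotent of `L(G)`, and the left-hand side of the functional
equation is `(φ * δ_{h⁻¹} * ψ)(g)`. A spherical `φ` satisfies `ψ * φ = φ * ψ = φ`, so its
eigenvalue property applied to `ψ * δ_{h⁻¹} * ψ ∈ H(G,K,ψ)` gives `φ * δ_{h⁻¹} * ψ = φ(h) φ`.
Conversely this identity forces `φ(1) = 1` and `ψ * φ = φ * ψ = φ`, and expanding
`f = ∑ₛ f(s) δₛ` yields `φ * f = φ * f * ψ = (∑ₛ f(s) φ(s⁻¹)) φ` for every `f ∈ H(G,K,ψ)`.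
-/

theorem convC_assoc (a b c : G → ℂ) : convC (convC a b) c = convC a (convC b c) := by
  funext g
  simp only [convC, Finset.sum_mul, Finset.mul_sum]
  rw [Finset.sum_comm]
  refine Finset.sum_congr rfl fun s _ => Fintype.sum_equiv (Equiv.mulLeft s⁻¹) _ _ fun t => ?_
  simp [mul_assoc]

theorem convC_single_apply (φ : G → ℂ) (a x : G) :
    convC φ (Pi.single a 1) x = φ (x * a⁻¹) := by
  rw [convC, Finset.sum_eq_single (x * a⁻¹)]
  · simp
  · intro t _ ht
    rw [Pi.single_apply, if_neg, mul_zero]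
    rintro rfl
    exact ht (by group)
  · simp

theorem convC_single_one (φ : G → ℂ) : convC φ (Pi.single 1 1) = φ :=
  funext fun x => by rw [convC_single_apply, inv_one, mul_one]

theorem convC_eq_self_right {e f : G → ℂ} (he : convC e e = e)
    (hf : convC (convC e f) e = f) : convC f e = f := by
  rw [← hf, convC_assoc _ e e, he]

theorem convC_eq_self_left {e f : G → ℂ} (he : convC e e = e)
    (hf : convC (convC e f) e = f) : convC e f = f := by
  rw [← hf, ← convC_assoc, ← convC_assoc, he]

theorem convC_sum_left {ι : Type} (s : Finset ι) (f : ι → G → ℂ) (g : G → ℂ) :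
    convC (∑ i ∈ s, f i) g = ∑ i ∈ s, convC (f i) g := by
  funext x
  simp only [convC, Finset.sum_apply, Finset.sum_mul]
  exact Finset.sum_comm

theorem convC_eq_sum_single (φ f : G → ℂ) : convC φ f = ∑ s, f s • convC φ (Pi.single s 1) := by
  funext x
  simp only [Finset.sum_apply, Pi.smul_apply, convC_single_apply, smul_eq_mul]
  refine Fintype.sum_equiv ((Equiv.inv G).trans (Equiv.mulRight x)) _ _ fun t => ?_
  simp [mul_comm]

theorem sum_eq_sum_subgroup {M : Type} [AddCommMonoid M] (K : Subgroup G) {F : G → M}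
    (hF : ∀ g ∉ K, F g = 0) : ∑ g, F g = ∑ k : K, F k := by
  rw [← Fintype.sum_subtype_add_sum_subtype (· ∈ K),
    Fintype.sum_eq_zero (fun g : {g // g ∉ K} => F g) (fun g => hF g g.2), add_zero]

section Schur

variable {H : Type} [Group H] {ρ : H →* (V ≃ₗ[ℂ] V)}

theorem IsIrreducibleRep.nontrivial (hρ : IsIrreducibleRep ρ) : Nontrivial V :=
  (Submodule.nontrivial_iff ℂ).mp (nontrivial_of_ne _ _ hρ.1)

theorem IsIrreducibleRep.exists_eq_smul_id (hρ : IsIrreducibleRep ρ) (T : V →ₗ[ℂ] V)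
    (hT : ∀ h x, ρ h (T x) = T (ρ h x)) : ∃ c : ℂ, T = c • LinearMap.id := by
  have := hρ.nontrivial
  obtain ⟨c, hc⟩ := Module.End.exists_eigenvalue T
  refine ⟨c, ?_⟩
  have hinv : ∀ h x, x ∈ Module.End.eigenspace T c → ρ h x ∈ Module.End.eigenspace T c := by
    intro h x hx
    rw [Module.End.mem_eigenspace_iff] at hx ⊢
    rw [← hT, hx, map_smul]
  obtain hbot | htop := hρ.2 _ hinv
  · exact absurd hbot hc
  · ext x
    simpa using Module.End.mem_eigenspace_iff.mp (htop ▸ Submodule.mem_top : x ∈ _)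

theorem IsIrreducibleRep.sum_conj_eq_smul_id [Fintype H] (hρ : IsIrreducibleRep ρ)
    (B : V →ₗ[ℂ] V) :
    ∑ h, (ρ h).toLinearMap ∘ₗ B ∘ₗ (ρ h⁻¹).toLinearMap =
      ((Nat.card H * LinearMap.trace ℂ V B) / Module.finrank ℂ V : ℂ) • LinearMap.id := by
  have := hρ.nontrivial
  obtain ⟨c, hc⟩ := hρ.exists_eq_smul_id (∑ h, (ρ h).toLinearMap ∘ₗ B ∘ₗ (ρ h⁻¹).toLinearMap)
    fun m x => by
      simp only [LinearMap.sum_apply, LinearMap.comp_apply, map_sum]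
      refine Fintype.sum_equiv (Equiv.mulLeft m) _ _ fun h => ?_
      simp [map_mul]
  have htrace : LinearMap.trace ℂ V (∑ h, (ρ h).toLinearMap ∘ₗ B ∘ₗ (ρ h⁻¹).toLinearMap) =
      Nat.card H * LinearMap.trace ℂ V B := by
    have hcancel : ∀ h, (B ∘ₗ (ρ h⁻¹).toLinearMap) ∘ₗ (ρ h).toLinearMap = B := fun h => by
      ext x; simp
    simp only [map_sum, LinearMap.trace_comp_comm', hcancel, Finset.sum_const,
      Finset.card_univ, Nat.card_eq_fintype_card, nsmul_eq_mul]
  have hd : (Module.finrank ℂ V : ℂ) ≠ 0 := by exact_mod_cast Module.finrank_pos.ne'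
  rw [hc] at htrace ⊢
  rw [map_smul, LinearMap.trace_id, smul_eq_mul] at htrace
  rw [← htrace, mul_div_cancel_right₀ _ hd]

theorem IsIrreducibleRep.sum_inner_mul_inner [Fintype H] (hρ : IsIrreducibleRep ρ) {v : V}
    (hv : ‖v‖ = 1) (w : V) :
    ∑ h, (inner ℂ (ρ h v) v : ℂ) * inner ℂ (ρ h⁻¹ w) v =
      (Nat.card H / Module.finrank ℂ V : ℂ) * inner ℂ w v := by
  have hsum := LinearMap.congr_fun
    (hρ.sum_conj_eq_smul_id (InnerProductSpace.rankOne ℂ v v).toLinearMap) w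
  have htr : LinearMap.trace ℂ V (InnerProductSpace.rankOne ℂ v v).toLinearMap = 1 := by
    rw [InnerProductSpace.trace_rankOne, inner_self_eq_norm_sq_to_K, hv]
    norm_num
  rw [htr, mul_one] at hsum
  have := congrArg (fun x => (inner ℂ x v : ℂ)) hsum
  simpa [sum_inner, inner_smul_left, mul_comm, Nat.card_eq_fintype_card] using this

end Schur

section Psi

variable {K θ} {v : V}

theorem psi_apply_coe (k : K) :
    psi K θ v k = (Module.finrank ℂ V / Nat.card K : ℂ) * inner ℂ (θ k v) v :=
  dif_pos k.2

theorem psi_apply_of_notMem {g : G} (hg : g ∉ K) : psi K θ v g = 0 :=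
  dif_neg hg

theorem conj_psi (hu : IsUnitaryRep θ) (g : G) : conj (psi K θ v g) = psi K θ v g⁻¹ := by
  by_cases hg : g ∈ K
  · lift g to K using hg
    rw [← Subgroup.coe_inv, psi_apply_coe, psi_apply_coe, map_mul, inner_conj_symm,
      ← hu g⁻¹ v, map_inv]
    simp [map_div₀]
  · rw [psi_apply_of_notMem hg, psi_apply_of_notMem (by simpa using hg), map_zero]

theorem sum_mul_psi_inv (hu : IsUnitaryRep θ) (F : G → ℂ) :
    ∑ m, F m * psi K θ v m⁻¹ = ∑ k : K, F k * conj (psi K θ v k) := by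
  simp_rw [← conj_psi hu]
  exact sum_eq_sum_subgroup K fun g hg => by rw [psi_apply_of_notMem hg, map_zero, mul_zero]

theorem convC_psi_apply (hu : IsUnitaryRep θ) (f : G → ℂ) (g : G) :
    convC f (psi K θ v) g = ∑ k : K, f (g * k) * conj (psi K θ v k) := by
  rw [← sum_mul_psi_inv hu fun m => f (g * m), convC]
  refine Fintype.sum_equiv (Equiv.mulLeft g⁻¹) _ _ fun t => ?_
  simp

theorem psi_convC_apply (hu : IsUnitaryRep θ) (f : G → ℂ) (g : G) :
    convC (psi K θ v) f g = ∑ k : K, f (k * g) * conj (psi K θ v k) := by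
  rw [← sum_mul_psi_inv hu fun m => f (m * g), convC]
  refine Fintype.sum_equiv (Equiv.inv G) _ _ fun t => ?_
  simp [mul_comm]

theorem psi_convC_psi (hirr : IsIrreducibleRep θ) (hv : ‖v‖ = 1) :
    convC (psi K θ v) (psi K θ v) = psi K θ v := by
  have := hirr.nontrivial
  have hd : (Module.finrank ℂ V : ℂ) ≠ 0 := by exact_mod_cast Module.finrank_pos.ne'
  have hK : (Nat.card K : ℂ) ≠ 0 := by exact_mod_cast Nat.card_pos.ne'
  funext g
  rw [convC, sum_eq_sum_subgroup K (F := fun t => psi K θ v t * psi K θ v (t⁻¹ * g))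
    fun t ht => by rw [psi_apply_of_notMem ht, zero_mul]]
  by_cases hg : g ∈ K
  · lift g to K using hg
    have hterm : ∀ k : K, psi K θ v k * psi K θ v ((k : G)⁻¹ * g) =
        (Module.finrank ℂ V / Nat.card K : ℂ) ^ 2 *
          ((inner ℂ (θ k v) v : ℂ) * inner ℂ (θ k⁻¹ (θ g v)) v) := fun k => by
      rw [← Subgroup.coe_inv, ← Subgroup.coe_mul, psi_apply_coe, psi_apply_coe, map_mul,
        LinearEquiv.mul_apply]
      ring
    rw [Finset.sum_congr rfl fun k _ => hterm k, ← Finset.mul_sum,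
      hirr.sum_inner_mul_inner hv, psi_apply_coe]
    field_simp
  · rw [psi_apply_of_notMem hg]
    refine Finset.sum_eq_zero fun k _ => mul_eq_zero_of_right _ (psi_apply_of_notMem fun h => ?_)
    exact hg (by simpa using mul_mem k.2 h)

end Psi

section Spherical

variable {K θ} {v : V} {φ : G → ℂ}

theorem convC_convC_single_psi_apply (hu : IsUnitaryRep θ) (φ : G → ℂ) (g h : G) :
    convC (convC φ (Pi.single h⁻¹ 1)) (psi K θ v) g =
      ∑ k : K, φ (g * k * h) * conj (psi K θ v k) := by
  simp [convC_psi_apply hu, convC_single_apply]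

theorem functionalEquation_iff (hu : IsUnitaryRep θ) :
    (∀ g h : G, ∑ k : K, φ (g * k * h) * conj (psi K θ v k) = φ g * φ h) ↔
      ∀ h : G, convC (convC φ (Pi.single h⁻¹ 1)) (psi K θ v) = φ h • φ := by
  simp only [funext_iff, ← convC_convC_single_psi_apply hu, Pi.smul_apply, smul_eq_mul]
  exact ⟨fun hfe h g => by rw [hfe, mul_comm], fun hfe g h => by rw [hfe, mul_comm]⟩

theorem IsSpherical.convC_convC_single_psi (hu : IsUnitaryRep θ)
    (hψ : convC (psi K θ v) (psi K θ v) = psi K θ v) (hφ : IsSpherical K θ v φ) (h : G) :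
    convC (convC φ (Pi.single h⁻¹ 1)) (psi K θ v) = φ h • φ := by
  obtain ⟨hmem, hone, heig⟩ := hφ
  set ψ := psi K θ v
  have hφψ : convC φ ψ = φ := convC_eq_self_right hψ hmem
  have hψφ : convC ψ φ = φ := convC_eq_self_left hψ hmem
  have hf : convC (convC ψ (Pi.single h⁻¹ 1)) ψ ∈ HSet K θ v := by
    show convC (convC ψ (convC (convC ψ (Pi.single h⁻¹ 1)) ψ)) ψ = _
    rw [← convC_assoc, ← convC_assoc, hψ, convC_assoc _ ψ ψ, hψ]
  obtain ⟨c, hc⟩ := heig _ hf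
  rw [← convC_assoc, ← convC_assoc, hφψ] at hc
  have hc_eq : c = φ h := by
    have := congrFun hc 1
    rw [convC_convC_single_psi_apply hu, Pi.smul_apply, hone, smul_eq_mul, mul_one] at this
    rw [← this, ← congrFun hψφ h, psi_convC_apply hu]
    simp
  rw [hc, hc_eq]

theorem isSpherical_of_convC_convC_single_psi (hu : IsUnitaryRep θ)
    (hψ : convC (psi K θ v) (psi K θ v) = psi K θ v) (hφ : φ ≠ 0)
    (hfe : ∀ h, convC (convC φ (Pi.single h⁻¹ 1)) (psi K θ v) = φ h • φ) :
    IsSpherical K θ v φ := by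
  set ψ := psi K θ v
  have hφψ_one : convC φ ψ = φ 1 • φ := by simpa [convC_single_one] using hfe 1
  have hone : φ 1 = 1 := by
    obtain ⟨g₀, hg₀⟩ : ∃ g, φ g ≠ 0 := Function.ne_iff.mp hφ
    have hproj : φ g₀ • φ = (φ g₀ * φ 1) • φ := calc
      φ g₀ • φ = convC (convC (convC φ (Pi.single g₀⁻¹ 1)) ψ) ψ := by
        rw [convC_assoc _ ψ ψ, hψ, hfe]
      _ = (φ g₀ * φ 1) • φ := by rw [hfe, convC_smul_left, hφψ_one, smul_smul]
    have := congrFun hproj g₀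
    simp only [Pi.smul_apply, smul_eq_mul] at this
    exact (mul_eq_left₀ hg₀).mp (mul_right_cancel₀ hg₀ this).symm
  have hφψ : convC φ ψ = φ := by rw [hφψ_one, hone, one_smul]
  have hψφ : convC ψ φ = φ := funext fun h => by
    have := congrFun (hfe h) 1
    rw [convC_convC_single_psi_apply hu] at this
    rw [psi_convC_apply hu]
    simpa [hone] using this
  refine ⟨show convC (convC ψ φ) ψ = φ by rw [hψφ, hφψ], hone, fun f hf => ⟨∑ s, f s * φ s⁻¹, ?_⟩⟩
  calc convC φ f = convC (convC φ f) ψ := by rw [convC_assoc, convC_eq_self_right hψ hf]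
    _ = ∑ s, f s • convC (convC φ (Pi.single s 1)) ψ := by
      rw [convC_eq_sum_single φ f, convC_sum_left]
      simp only [convC_smul_left]
    _ = ∑ s, (f s * φ s⁻¹) • φ := by
      refine Finset.sum_congr rfl fun s _ => ?_
      rw [← inv_inv s, hfe, inv_inv, smul_smul]
    _ = (∑ s, f s * φ s⁻¹) • φ := (Finset.sum_smul ..).symm

end Spherical

theorem statement7_general (K : Subgroup G) (θ : ↥K →* (V ≃ₗ[ℂ] V))
    (hu : IsUnitaryRep θ) (hirr : IsIrreducibleRep θ) (v : V) (hv : ‖v‖ = 1)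
    (φ : G → ℂ) (hφ : φ ≠ 0) :
    IsSpherical K θ v φ ↔
      ∀ g h : G, (∑ k : K, φ (g * (k : G) * h) * conj (psi K θ v (k : G))) = φ g * φ h := by
  have hψ := psi_convC_psi hirr hv
  rw [functionalEquation_iff hu]
  exact ⟨fun hsph => hsph.convC_convC_single_psi hu hψ,
    isSpherical_of_convC_convC_single_psi hu hψ hφ⟩

/-- functional equation for spherical functions.  If `(G,K,θ)` is a
multiplicity-free triple, a nonzero `φ ∈ L(G)` is spherical iff
`∑_{k ∈ K} φ(g k h) conj(ψ k) = φ(g) φ(h)` for all `g, h ∈ G`. -/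
theorem statement7 (K : Subgroup G) (θ : ↥K →* (V ≃ₗ[ℂ] V))
    (hu : IsUnitaryRep θ) (hirr : IsIrreducibleRep θ) (v : V) (hv : ‖v‖ = 1)
    (hmf : IsMultFree K θ) (φ : G → ℂ) (hφ : φ ≠ 0) :
    IsSpherical K θ v φ ↔
      ∀ g h : G, (∑ k : K, φ (g * (k : G) * h) * conj (psi K θ v (k : G))) = φ g * φ h :=
  statement7_general K θ hu hirr v hv φ hφ

end MFT
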